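/- arXiv:1708.05195 — 7 statements merged into one kernel-verified Lean document; each statement's English description precedes it below -/
import Mathlib

section
/- Let f be C¹ on an open neighborhood of C and strongly competitive, and suppose that for each j ∈ {1,…,n} an axial rest point x^(j) is given. Let I ⊆ {1,…,n} be such that its complement I' has at least two elements (equivalently |I| ≤ n−2). Then f_i(x^[I]) < 0 for every i ∈ I'; consequently F_i(x^[I]) := x^[I]_i · f_i(x^[I]) < 0 for every i ∈ I'. -/
/-!
Fix `i ∉ I`. The vector `v := x^[I] - x^(i)` vanishes in coordinate `i`, is nonnegative elsewhere
and positive at some `j ∈ I'`, `j ≠ i`, so by strong competition the derivative of `f_i` in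
direction `v` is negative along the segment from `x^(i)` to `x^[I]`, which lies in `C`. The mean
value theorem gives `f_i(x^[I]) < f_i(x^(i)) = 0`, and `x^[I]_i = x^(i)_i > 0`.
-/

theorem ContinuousLinearMap.apply_neg_of_apply_single_neg {ι : Type*} [Fintype ι] [DecidableEq ι]
    (L : (ι → ℝ) →L[ℝ] ℝ) {i j : ι} (hL : ∀ k ≠ i, L (Pi.single k 1) < 0) {v : ι → ℝ}
    (hv : 0 ≤ v) (hvi : v i = 0) (hvj : 0 < v j) : L v < 0 := by
  have hexpand : L v = ∑ k, v k * L (Pi.single k 1) := by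
    conv_lhs => rw [← Finset.univ_sum_single v]
    simp only [map_sum]
    refine Finset.sum_congr rfl fun k _ => ?_
    rw [← smul_eq_mul, ← map_smul, ← Pi.single_smul', smul_eq_mul, mul_one]
  have hji : j ≠ i := by rintro rfl; linarith
  rw [hexpand]
  refine Finset.sum_neg' (fun k _ => ?_)
    ⟨j, Finset.mem_univ j, mul_neg_of_pos_of_neg hvj (hL j hji)⟩
  rcases eq_or_ne k i with rfl | hki
  · simp [hvi]
  · exact mul_nonpos_of_nonneg_of_nonpos (hv k) (hL k hki).le

theorem differentiableAt_of_fderiv_apply_ne_zero {E F : Type*} [NormedAddCommGroup E]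
    [NormedSpace ℝ E] [NormedAddCommGroup F] [NormedSpace ℝ F] {g : E → F} {x v : E}
    (h : fderiv ℝ g x v ≠ 0) : DifferentiableAt ℝ g x := by
  by_contra hg
  simp [fderiv_zero_of_not_differentiableAt hg] at h

theorem lt_of_fderiv_apply_neg_on_segment {E : Type*} [NormedAddCommGroup E] [NormedSpace ℝ E]
    {g : E → ℝ} {a b : E} (hg : ∀ x ∈ segment ℝ a b, DifferentiableAt ℝ g x)
    (hneg : ∀ x ∈ segment ℝ a b, fderiv ℝ g x (b - a) < 0) : g b < g a := by
  obtain ⟨z, hz, hmvt⟩ := domain_mvt (fun x hx => (hg x hx).hasFDerivAt.hasFDerivWithinAt)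
    (convex_segment a b) (left_mem_segment ℝ a b) (right_mem_segment ℝ a b)
  linarith [hneg z hz]

theorem stmt2_general {n : ℕ} (f : (Fin n → ℝ) → (Fin n → ℝ))
    (hcomp : ∀ x : Fin n → ℝ, (∀ k, 0 ≤ x k) → ∀ i j : Fin n, i ≠ j →
      fderiv ℝ (fun y => f y i) x (Pi.single j 1) < 0)
    (xa : Fin n → (Fin n → ℝ))
    (hxapos : ∀ j, 0 < xa j j)
    (hxazero : ∀ j k, k ≠ j → xa j k = 0)
    (hxarest : ∀ j, f (xa j) j = 0)
    (I : Finset (Fin n)) (hI : 2 ≤ Iᶜ.card)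
    (xI : Fin n → ℝ) (hxI : xI = fun j => if j ∈ I then 0 else xa j j) :
    ∀ i ∉ I, f xI i < 0 ∧ xI i * f xI i < 0 := by
  intro i hi
  obtain ⟨j, hjI, hji⟩ := Finset.exists_mem_ne (by omega : 1 < Iᶜ.card) i
  rw [Finset.mem_compl] at hjI
  have hxI_nonneg : 0 ≤ xI := fun k => by
    simp only [hxI, Pi.zero_apply]; split_ifs
    exacts [le_rfl, (hxapos k).le]
  have hxa_nonneg : 0 ≤ xa i := fun k => by
    rcases eq_or_ne k i with rfl | hki
    exacts [(hxapos k).le, (hxazero i k hki).ge]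
  have hxIi : xI i = xa i i := by simp [hxI, hi]
  have hdir : ∀ x ∈ segment ℝ (xa i) xI, fderiv ℝ (fun y => f y i) x (xI - xa i) < 0 := by
    intro x hx
    have hx0 : ∀ k, 0 ≤ x k := (convex_Ici 0).segment_subset hxa_nonneg hxI_nonneg hx
    refine (fderiv ℝ (fun y => f y i) x).apply_neg_of_apply_single_neg
      (fun k hki => hcomp x hx0 i k hki.symm) (j := j) ?_ (by simp [hxIi]) ?_
    · intro k
      rcases eq_or_ne k i with rfl | hki
      · simp [hxIi]
      · simpa [hxazero i k hki] using hxI_nonneg k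
    · simp [hxI, hjI, hxazero i j hji, hxapos j]
  -- `fderiv` is `0` off the differentiability locus, so a negative directional derivative forces it.
  have hdiff : ∀ x ∈ segment ℝ (xa i) xI, DifferentiableAt ℝ (fun y => f y i) x :=
    fun x hx => differentiableAt_of_fderiv_apply_ne_zero (hdir x hx).ne
  have hlt := lt_of_fderiv_apply_neg_on_segment hdiff hdir
  rw [hxarest] at hlt
  exact ⟨hlt, mul_neg_of_pos_of_neg (hxIi ▸ hxapos i) hlt⟩

/-- If `f` is `C¹` on an open neighborhood of the orthant `C` and strongly competitive, with
axial rest points `x^(j)`, and `I` is a set of indices whose complement has at least two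
elements, then `f_i(x^[I]) < 0` and hence `F_i(x^[I]) = x^[I]_i · f_i(x^[I]) < 0` for every
`i ∈ I'`.  Here `x^[I]` is the coordinatewise supremum of `{x^(j) : j ∈ I'}`. -/
theorem stmt2 {n : ℕ} (f : (Fin n → ℝ) → (Fin n → ℝ)) (U : Set (Fin n → ℝ))
    (hU : IsOpen U) (hCU : {x : Fin n → ℝ | ∀ k, 0 ≤ x k} ⊆ U)
    (hf : ContDiffOn ℝ 1 f U)
    (hcomp : ∀ x : Fin n → ℝ, (∀ k, 0 ≤ x k) → ∀ i j : Fin n, i ≠ j →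
      fderiv ℝ (fun y => f y i) x (Pi.single j 1) < 0)
    (xa : Fin n → (Fin n → ℝ))
    (hxaC : ∀ j k, 0 ≤ xa j k)
    (hxapos : ∀ j, 0 < xa j j)
    (hxazero : ∀ j k, k ≠ j → xa j k = 0)
    (hxarest : ∀ j, f (xa j) j = 0)
    (I : Finset (Fin n)) (hI : 2 ≤ Iᶜ.card)
    (xI : Fin n → ℝ) (hxI : xI = fun j => if j ∈ I then 0 else xa j j) :
    ∀ i ∉ I, f xI i < 0 ∧ xI i * f xI i < 0 :=
  stmt2_general f hcomp xa hxapos hxazero hxarest I hI xI hxI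
end

section
/- (Lemma 2 of the paper.) Let n ≥ 3, let f be C¹ on an open neighborhood of C and strongly competitive, with axial rest points x^(1),…,x^(n). Let Σ ⊆ C be a compact set such that: (i) Σ is forward invariant under solutions of (E), i.e. for every y ∈ Σ there exists T > 0 and a differentiable x : [0,T] → C with x(0) = y and x_k'(t) = x_k(t) f_k(x(t)) for all k, t, and every such solution starting in Σ stays in Σ; (ii) x^(k) ∈ Σ for every k; (iii) for every J ⊆ {1,…,n} no two distinct points of Σ ∩ C_J are related by ≪_J. Then for every I ⊆ {1,…,n} with 1 ≤ |I| ≤ n−2, every y ∈ Σ ∩ C_I satisfies y <_I x^[I]. -/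
/-!
If some `y ∈ Σ` had `y_j > x^(j)_j`, then `x^(j) ≪_J y` on the face `C_J` of the zero set `J`
of `y`, against unorderedness; so `y ≤_I x^[I]`. If `y = x^[I]` and at least two coordinates are
free, then for each free `j` the point `y` lies above `x^(j)`, equal in coordinate `j` and
strictly larger in another, so strong competition gives `f_j(y) < f_j(x^(j)) = 0`. Hence the
solution through `y` decreases strictly in every free coordinate while staying in `C_I`, and
after a short time it is a point of `Σ ∩ C_I` that is `≪_I y`, again against unorderedness.
-/

open Set Filter Topology Finset

theorem eqOn_zero_of_hasDerivWithinAt_mul {φ c : ℝ → ℝ} {a b : ℝ}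
    (hc : ContinuousOn c (Icc a b))
    (hφ : ∀ t ∈ Icc a b, HasDerivWithinAt φ (φ t * c t) (Icc a b) t) (ha : φ a = 0) :
    EqOn φ 0 (Icc a b) := by
  obtain ⟨M, hM⟩ := isCompact_Icc.exists_bound_of_continuousOn hc
  have hφ' : ∀ t ∈ Ico a b, HasDerivWithinAt φ (φ t * c t) (Ici t) t := fun t ht =>
    (hφ t (Ico_subset_Icc_self ht)).mono_of_mem_nhdsWithin (Icc_mem_nhdsGE_of_mem ht)
  have hbound : ∀ t ∈ Ico a b, ‖φ t * c t‖ ≤ M * ‖φ t‖ + 0 := fun t ht => by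
    rw [norm_mul, add_zero, mul_comm M]
    exact mul_le_mul_of_nonneg_left (hM t (Ico_subset_Icc_self ht)) (norm_nonneg _)
  intro t ht
  have := norm_le_gronwallBound_of_norm_deriv_right_le (δ := 0)
    (HasDerivWithinAt.continuousOn (f' := fun t => φ t * c t) hφ) hφ' (by simp [ha]) hbound
    t ht
  simpa [gronwallBound_ε0_δ0] using this

theorem HasDerivWithinAt.eventually_lt_of_neg {φ : ℝ → ℝ} {φ' a b : ℝ} (hab : a < b)
    (hφ : HasDerivWithinAt φ φ' (Icc a b) a) (hneg : φ' < 0) : ∀ᶠ t in 𝓝[>] a, φ t < φ a := by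
  have hslope : Tendsto (slope φ a) (𝓝[>] a) (𝓝 φ') :=
    (hasDerivWithinAt_iff_tendsto_slope' (lt_irrefl a)).1
      (hφ.mono_of_mem_nhdsWithin (Icc_mem_nhdsGE hab)).Ioi_of_Ici
  filter_upwards [hslope.eventually (gt_mem_nhds hneg), self_mem_nhdsWithin] with t ht hat
  have hsub : φ t - φ a = (t - a) * slope φ a t := by
    rw [← smul_eq_mul, sub_smul_slope, vsub_eq_sub]
  linarith [mul_neg_of_pos_of_neg (sub_pos.2 hat) ht]

variable {ι : Type*}

theorem solution_apply_eq_zero {f : (ι → ℝ) → ι → ℝ} {K : Set (ι → ℝ)}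
    (hf : ContinuousOn f K) {T : ℝ} {x : ℝ → ι → ℝ} (hxK : MapsTo x (Icc 0 T) K)
    (hxd : ∀ k, ∀ t ∈ Icc 0 T,
      HasDerivWithinAt (fun s => x s k) (x t k * f (x t) k) (Icc 0 T) t)
    {k : ι} (hk : x 0 k = 0) : ∀ t ∈ Icc 0 T, x t k = 0 := by
  have hx : ContinuousOn x (Icc 0 T) :=
    continuousOn_pi.2 fun i => HasDerivWithinAt.continuousOn (hxd i)
  exact eqOn_zero_of_hasDerivWithinAt_mul
    ((continuous_apply k).comp_continuousOn (hf.comp hx hxK)) (hxd k) hk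

def FacesUnordered (S : Set (ι → ℝ)) : Prop :=
  ∀ J : Finset ι, ∀ y ∈ S, ∀ z ∈ S, y ≠ z →
    (∀ j ∈ J, y j = 0) → (∀ j ∈ J, z j = 0) → ¬ ∀ j ∉ J, y j < z j

variable [Fintype ι]

theorem FacesUnordered.apply_le_of_axial {S : Set (ι → ℝ)} (hS : FacesUnordered S)
    (hSC : S ⊆ {x | ∀ k, 0 ≤ x k}) {a : ι → ℝ} {j : ι} (ha : a ∈ S)
    (ha0 : ∀ k, k ≠ j → a k = 0)
    {y : ι → ℝ} (hy : y ∈ S) : y j ≤ a j := by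
  classical
  by_contra! hlt
  refine hS {k | y k = 0} a ha y hy (fun h => hlt.ne (h ▸ rfl)) (fun k hk => ha0 k ?_)
    (fun k hk => by simpa using hk) (fun k hk => ?_)
  · rintro rfl
    have : y k = 0 := by simpa using hk
    linarith [hSC ha k]
  · rcases eq_or_ne k j with rfl | hkj
    · exact hlt
    · rw [ha0 k hkj]
      exact (hSC hy k).lt_of_ne (Ne.symm (by simpa using hk))

theorem exists_forall_lt_of_mul_neg {f : (ι → ℝ) → ι → ℝ} {K : Set (ι → ℝ)}
    (hf : ContinuousOn f K) {T : ℝ} (hT : 0 < T) {x : ℝ → ι → ℝ}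
    (hxK : MapsTo x (Icc 0 T) K)
    (hxd : ∀ k, ∀ t ∈ Icc 0 T,
      HasDerivWithinAt (fun s => x s k) (x t k * f (x t) k) (Icc 0 T) t)
    {I : Finset ι} (hI : ∀ i ∈ I, x 0 i = 0) (hneg : ∀ j ∉ I, x 0 j * f (x 0) j < 0) :
    ∃ t ∈ Icc 0 T, (∀ i ∈ I, x t i = 0) ∧ ∀ j ∉ I, x t j < x 0 j := by
  have hdec : ∀ᶠ t in 𝓝[>] 0, ∀ j ∉ I, x t j < x 0 j := by
    refine eventually_all.2 fun j => ?_
    by_cases hj : j ∈ I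
    · simp [hj]
    · filter_upwards [(hxd j 0 (left_mem_Icc.2 hT.le)).eventually_lt_of_neg hT (hneg j hj)]
        with t ht _ using ht
  obtain ⟨t, hlt, ht⟩ := (hdec.and (Ioc_mem_nhdsGT hT)).exists
  exact ⟨t, Ioc_subset_Icc_self ht,
    fun i hi => solution_apply_eq_zero hf hxK hxd (hI i hi) t (Ioc_subset_Icc_self ht), hlt⟩

variable [DecidableEq ι]

/-- The point `x^[I]`, the supremum of the axial points `x^(j)` with `j ∉ I`. -/
def axialSup (xa : ι → ι → ℝ) (I : Finset ι) : ι → ℝ :=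
  fun j => if j ∈ I then 0 else xa j j

theorem ContinuousLinearMap.apply_neg_of_apply_single_neg_s4 (D : (ι → ℝ) →L[ℝ] ℝ) {j : ι}
    (hD : ∀ k, k ≠ j → D (Pi.single k 1) < 0) {v : ι → ℝ} (hv : 0 ≤ v) (hvj : v j = 0)
    {l : ι} (hvl : 0 < v l) : D v < 0 := by
  have hsum : D v = ∑ k, v k * D (Pi.single k 1) := by
    conv_lhs => rw [← Finset.univ_sum_single v]
    simp only [map_sum]
    refine Finset.sum_congr rfl fun k _ => ?_
    rw [← smul_eq_mul, ← map_smul, ← Pi.single_smul, smul_eq_mul, mul_one]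
  rw [hsum, ← Finset.sum_const_zero (s := (univ : Finset ι))]
  refine Finset.sum_lt_sum (fun k _ => ?_) ⟨l, mem_univ l, ?_⟩
  · rcases eq_or_ne k j with rfl | hkj
    · simp [hvj]
    · exact mul_nonpos_of_nonneg_of_nonpos (hv k) (hD k hkj).le
  · exact mul_neg_of_pos_of_neg hvl (hD l fun h => by simp [h, hvj] at hvl)

theorem Convex.apply_lt_apply_of_fderiv_single_neg {K : Set (ι → ℝ)} (hK : Convex ℝ K)
    {g : (ι → ℝ) → ℝ} {j : ι} (hg : ∀ x ∈ K, DifferentiableAt ℝ g x)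
    (hneg : ∀ x ∈ K, ∀ k, k ≠ j → fderiv ℝ g x (Pi.single k 1) < 0)
    {p q : ι → ℝ} (hp : p ∈ K) (hq : q ∈ K) (hpq : p ≤ q) (hj : p j = q j) {l : ι}
    (hl : p l < q l) : g q < g p := by
  obtain ⟨z, hz, hgz⟩ :=
    domain_mvt (fun x hx => (hg x hx).hasFDerivAt.hasFDerivWithinAt) hK hp hq
  have := (fderiv ℝ g z).apply_neg_of_apply_single_neg_s4
    (hneg z (hK.segment_subset hp hq hz)) (sub_nonneg.2 hpq) (by simp [hj]) (sub_pos.2 hl)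
  linarith

theorem apply_axialSup_lt {f : (ι → ℝ) → ι → ℝ}
    (hdiff : ∀ x : ι → ℝ, (∀ k, 0 ≤ x k) → DifferentiableAt ℝ f x)
    (hcomp : ∀ x : ι → ℝ, (∀ k, 0 ≤ x k) → ∀ i j : ι, i ≠ j →
      fderiv ℝ (fun y => f y i) x (Pi.single j 1) < 0)
    {xa : ι → ι → ℝ} (hxapos : ∀ j, 0 < xa j j) {I : Finset ι} {j m : ι}
    (hxaj : ∀ k, k ≠ j → xa j k = 0) (hj : j ∉ I) (hm : m ∉ I) (hmj : m ≠ j) :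
    f (axialSup xa I) j < f (xa j) j := by
  have hsup : ∀ k, 0 ≤ axialSup xa I k := fun k => by
    unfold axialSup; split_ifs <;> simp [(hxapos k).le]
  have hxa : 0 ≤ xa j := fun k => by
    rcases eq_or_ne k j with rfl | hkj
    · exact (hxapos k).le
    · exact (hxaj k hkj).ge
  have hle : xa j ≤ axialSup xa I := fun k => by
    rcases eq_or_ne k j with rfl | hkj
    · simp [axialSup, hj]
    · simpa [hxaj k hkj] using hsup k
  refine (convex_Ici (0 : ι → ℝ)).apply_lt_apply_of_fderiv_single_neg
    (fun x hx => differentiableAt_pi.1 (hdiff x hx) j) (fun x hx k hkj => hcomp x hx j k hkj.symm)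
    hxa hsup hle (by simp [axialSup, hj]) (l := m) ?_
  simp [axialSup, hm, hxaj m hmj, hxapos]

theorem stmt4_general {n : ℕ} (f : (Fin n → ℝ) → (Fin n → ℝ)) (U : Set (Fin n → ℝ))
    (hU : IsOpen U) (hCU : {x : Fin n → ℝ | ∀ k, 0 ≤ x k} ⊆ U)
    (hf : ContDiffOn ℝ 1 f U)
    (hcomp : ∀ x : Fin n → ℝ, (∀ k, 0 ≤ x k) → ∀ i j : Fin n, i ≠ j →
      fderiv ℝ (fun y => f y i) x (Pi.single j 1) < 0)
    (xa : Fin n → (Fin n → ℝ))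
    (hxapos : ∀ j, 0 < xa j j)
    (hxazero : ∀ j k, k ≠ j → xa j k = 0)
    (hxarest : ∀ j, f (xa j) j = 0)
    (S : Set (Fin n → ℝ)) (hSC : S ⊆ {x : Fin n → ℝ | ∀ k, 0 ≤ x k})
    -- (i) through every point of `S` there is a forward solution of (E) staying in `C` …
    (hexist : ∀ y ∈ S, ∃ T : ℝ, 0 < T ∧ ∃ x : ℝ → (Fin n → ℝ), x 0 = y ∧
      (∀ t ∈ Set.Icc 0 T, ∀ k, 0 ≤ x t k) ∧
      (∀ k : Fin n, ∀ t ∈ Set.Icc 0 T,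
        HasDerivWithinAt (fun s => x s k) (x t k * f (x t) k) (Set.Icc 0 T) t))
    -- … and every solution of (E) starting in `S` stays in `S`
    (hinv : ∀ T : ℝ, 0 < T → ∀ x : ℝ → (Fin n → ℝ), x 0 ∈ S →
      (∀ t ∈ Set.Icc 0 T, ∀ k, 0 ≤ x t k) →
      (∀ k : Fin n, ∀ t ∈ Set.Icc 0 T,
        HasDerivWithinAt (fun s => x s k) (x t k * f (x t) k) (Set.Icc 0 T) t) →
      ∀ t ∈ Set.Icc 0 T, x t ∈ S)
    -- (ii) all axial rest points belong to `S`
    (haxial : ∀ k, xa k ∈ S)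
    -- (iii) no two distinct points of `S ∩ C_J` are related by `≪_J`
    (hunord : ∀ J : Finset (Fin n), ∀ y ∈ S, ∀ z ∈ S, y ≠ z →
      (∀ j ∈ J, y j = 0) → (∀ j ∈ J, z j = 0) → ¬ (∀ j ∉ J, y j < z j)) :
    ∀ I : Finset (Fin n), 1 ≤ I.card → I.card ≤ n - 2 →
      ∀ y ∈ S, (∀ i ∈ I, y i = 0) →
        (∀ j ∉ I, y j ≤ (if j ∈ I then 0 else xa j j)) ∧
          y ≠ (fun j => if j ∈ I then 0 else xa j j) := by
  intro I hI1 hI2 y hyS hyI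
  have hfree : 1 < #Iᶜ := by
    rw [card_compl, Fintype.card_fin]
    omega
  refine ⟨fun j hj => by simpa [hj] using
    FacesUnordered.apply_le_of_axial hunord hSC (haxial j) (hxazero j) hyS, fun hy => ?_⟩
  have hdiff (x : Fin n → ℝ) (hx : ∀ k, 0 ≤ x k) : DifferentiableAt ℝ f x :=
    (hf.differentiableOn one_ne_zero).differentiableAt (hU.mem_nhds (hCU hx))
  have hneg : ∀ j ∉ I, y j * f y j < 0 := fun j hj => by
    obtain ⟨m, hm, hmj⟩ := exists_mem_ne hfree j
    have hlt := apply_axialSup_lt hdiff hcomp hxapos (hxazero j) hj (by simpa using hm) hmj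
    rw [hxarest j] at hlt
    rw [hy]
    exact mul_neg_of_pos_of_neg (by simpa [hj] using hxapos j) hlt
  obtain ⟨T, hT, x, rfl, hxC, hxd⟩ := hexist y hyS
  obtain ⟨t, ht, htI, hlt⟩ :=
    exists_forall_lt_of_mul_neg (hf.continuousOn.mono hCU) hT hxC hxd hyI hneg
  obtain ⟨j, hj⟩ := card_pos.1 (zero_lt_one.trans hfree)
  exact hunord I (x t) (hinv T hT x hyS hxC hxd t ht) (x 0) hyS
    (fun h => (hlt j (by simpa using hj)).ne (congrFun h j)) htI hyI hlt

/-- Lemma 2 of the paper.  Let `n ≥ 3`, `f` strongly competitive and `C¹` near the orthant,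
with axial rest points `x^(k)`.  Let `S ⊆ C` be compact, forward invariant under solutions of
`ẋ_k = x_k f_k(x)` (with solutions through each of its points), containing all the axial rest
points, and such that for every `J` no two distinct points of `S ∩ C_J` are related by `≪_J`.
Then for every `I` with `1 ≤ |I| ≤ n - 2`, every `y ∈ S ∩ C_I` satisfies `y <_I x^[I]`. -/
theorem stmt4 {n : ℕ} (hn : 3 ≤ n) (f : (Fin n → ℝ) → (Fin n → ℝ)) (U : Set (Fin n → ℝ))
    (hU : IsOpen U) (hCU : {x : Fin n → ℝ | ∀ k, 0 ≤ x k} ⊆ U)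
    (hf : ContDiffOn ℝ 1 f U)
    (hcomp : ∀ x : Fin n → ℝ, (∀ k, 0 ≤ x k) → ∀ i j : Fin n, i ≠ j →
      fderiv ℝ (fun y => f y i) x (Pi.single j 1) < 0)
    (xa : Fin n → (Fin n → ℝ))
    (hxaC : ∀ j k, 0 ≤ xa j k)
    (hxapos : ∀ j, 0 < xa j j)
    (hxazero : ∀ j k, k ≠ j → xa j k = 0)
    (hxarest : ∀ j, f (xa j) j = 0)
    (S : Set (Fin n → ℝ)) (hSC : S ⊆ {x : Fin n → ℝ | ∀ k, 0 ≤ x k})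
    (hScomp : IsCompact S)
    -- (i) through every point of `S` there is a forward solution of (E) staying in `C` …
    (hexist : ∀ y ∈ S, ∃ T : ℝ, 0 < T ∧ ∃ x : ℝ → (Fin n → ℝ), x 0 = y ∧
      (∀ t ∈ Set.Icc 0 T, ∀ k, 0 ≤ x t k) ∧
      (∀ k : Fin n, ∀ t ∈ Set.Icc 0 T,
        HasDerivWithinAt (fun s => x s k) (x t k * f (x t) k) (Set.Icc 0 T) t))
    -- … and every solution of (E) starting in `S` stays in `S`
    (hinv : ∀ T : ℝ, 0 < T → ∀ x : ℝ → (Fin n → ℝ), x 0 ∈ S →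
      (∀ t ∈ Set.Icc 0 T, ∀ k, 0 ≤ x t k) →
      (∀ k : Fin n, ∀ t ∈ Set.Icc 0 T,
        HasDerivWithinAt (fun s => x s k) (x t k * f (x t) k) (Set.Icc 0 T) t) →
      ∀ t ∈ Set.Icc 0 T, x t ∈ S)
    -- (ii) all axial rest points belong to `S`
    (haxial : ∀ k, xa k ∈ S)
    -- (iii) no two distinct points of `S ∩ C_J` are related by `≪_J`
    (hunord : ∀ J : Finset (Fin n), ∀ y ∈ S, ∀ z ∈ S, y ≠ z →
      (∀ j ∈ J, y j = 0) → (∀ j ∈ J, z j = 0) → ¬ (∀ j ∉ J, y j < z j)) :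
    ∀ I : Finset (Fin n), 1 ≤ I.card → I.card ≤ n - 2 →
      ∀ y ∈ S, (∀ i ∈ I, y i = 0) →
        (∀ j ∉ I, y j ≤ (if j ∈ I then 0 else xa j j)) ∧
          y ≠ (fun j => if j ∈ I then 0 else xa j j) :=
  stmt4_general f U hU hCU hf hcomp xa hxapos hxazero hxarest S hSC hexist hinv haxial hunord
end

section
/- Let f be C¹ on an open neighborhood of C and strongly competitive, with axial rest points x^(1),…,x^(n). Then the following two conditions are equivalent: (a) for each i ∈ {1,…,n}, f_i(x^[{i}]) ≥ 0; (b) for every I ⊆ {1,…,n} with 1 ≤ |I| ≤ n−1 and every i ∈ I, f_i(x^[I]) ≥ 0. (Thus hypothesis (A) admits the stated equivalent formulation.) -/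
/-!
Strong competition makes each `f_i` nonincreasing on `C` in every coordinate `x_j`, `j ≠ i`
(mean value theorem along a segment of `C`, with the directional derivative expanded in the
coordinate directions). For `i ∈ I` the points `x^[I] ≤ x^[{i}]` have the same `i`-th coordinate
`0`, so `f_i(x^[I]) ≥ f_i(x^[{i}]) ≥ 0`.
-/

open Set

variable {ι : Type*} [Fintype ι] [DecidableEq ι]

theorem ContinuousLinearMap.apply_nonpos_of_single_nonpos (L : (ι → ℝ) →L[ℝ] ℝ) {v : ι → ℝ}
    {i : ι} (hv : 0 ≤ v) (hvi : v i = 0) (hL : ∀ j ≠ i, L (Pi.single j 1) ≤ 0) : L v ≤ 0 := by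
  rw [pi_eq_sum_univ' v, map_sum]
  refine Finset.sum_nonpos fun j _ => ?_
  rw [L.map_smul, smul_eq_mul]
  by_cases hj : j = i
  · simp [hj, hvi]
  · exact mul_nonpos_of_nonneg_of_nonpos (hv j) (hL j hj)

theorem apply_le_apply_of_competitive {f : (ι → ℝ) → ι → ℝ} {U : Set (ι → ℝ)} (hU : IsOpen U)
    (hCU : Ici 0 ⊆ U) (hf : ContDiffOn ℝ 1 f U)
    (hcomp : ∀ x, 0 ≤ x → ∀ i j, i ≠ j → fderiv ℝ (fun y => f y i) x (Pi.single j 1) ≤ 0)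
    {x y : ι → ℝ} {i : ι} (hx : 0 ≤ x) (hxy : x ≤ y) (hi : x i = y i) : f y i ≤ f x i := by
  have hdiff : ∀ z ∈ Ici (0 : ι → ℝ), DifferentiableAt ℝ (fun y => f y i) z := fun z hz =>
    differentiableAt_pi.mp
      ((hf.differentiableOn one_ne_zero z (hCU hz)).differentiableAt (hU.mem_nhds (hCU hz))) i
  obtain ⟨z, hz, hmvt⟩ := domain_mvt (fun z hz => (hdiff z hz).hasFDerivAt.hasFDerivWithinAt)
    (convex_Ici 0) hx (hx.trans hxy)
  have hz0 : 0 ≤ z := (convex_Ici 0).segment_subset hx (hx.trans hxy) hz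
  have hderiv : fderiv ℝ (fun y => f y i) z (y - x) ≤ 0 :=
    ContinuousLinearMap.apply_nonpos_of_single_nonpos _ (sub_nonneg.mpr hxy)
      (sub_eq_zero.mpr hi.symm) fun j hj => hcomp z hz0 i j (Ne.symm hj)
  linarith

theorem stmt5_general {n : ℕ} (hn : 3 ≤ n) (f : (Fin n → ℝ) → (Fin n → ℝ)) (U : Set (Fin n → ℝ))
    (hU : IsOpen U) (hCU : {x : Fin n → ℝ | ∀ k, 0 ≤ x k} ⊆ U)
    (hf : ContDiffOn ℝ 1 f U)
    (hcomp : ∀ x : Fin n → ℝ, (∀ k, 0 ≤ x k) → ∀ i j : Fin n, i ≠ j →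
      fderiv ℝ (fun y => f y i) x (Pi.single j 1) < 0)
    (xa : Fin n → (Fin n → ℝ))
    (hxaC : ∀ j k, 0 ≤ xa j k) :
    (∀ i : Fin n, 0 ≤ f (fun j => if j = i then 0 else xa j j) i) ↔
      (∀ I : Finset (Fin n), 1 ≤ I.card → I.card ≤ n - 1 → ∀ i ∈ I,
        0 ≤ f (fun j => if j ∈ I then 0 else xa j j) i) := by
  constructor
  · intro hA I _ _ i hiI
    refine (hA i).trans (apply_le_apply_of_competitive hU hCU hf
      (fun x hx i j hij => (hcomp x hx i j hij).le) ?_ ?_ (by simp [hiI]))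
    · intro k
      dsimp only [Pi.zero_apply]
      split_ifs
      exacts [le_rfl, hxaC k k]
    · intro k
      by_cases hk : k = i
      · simp [hk, hiI]
      · dsimp only
        split_ifs
        exacts [hxaC k k, le_rfl]
  · intro hB i
    simpa using hB {i} (by simp) (by simp; omega) i (Finset.mem_singleton_self i)

/-- For a strongly competitive system with axial rest points `x^(j)`, hypothesis (A)
(`f_i(x^[{i}]) ≥ 0` for every `i`) is equivalent to the formulation:
for every `I` with `1 ≤ |I| ≤ n - 1` and every `i ∈ I`, `f_i(x^[I]) ≥ 0`. -/
theorem stmt5 {n : ℕ} (hn : 3 ≤ n) (f : (Fin n → ℝ) → (Fin n → ℝ)) (U : Set (Fin n → ℝ))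
    (hU : IsOpen U) (hCU : {x : Fin n → ℝ | ∀ k, 0 ≤ x k} ⊆ U)
    (hf : ContDiffOn ℝ 1 f U)
    (hcomp : ∀ x : Fin n → ℝ, (∀ k, 0 ≤ x k) → ∀ i j : Fin n, i ≠ j →
      fderiv ℝ (fun y => f y i) x (Pi.single j 1) < 0)
    (xa : Fin n → (Fin n → ℝ))
    (hxaC : ∀ j k, 0 ≤ xa j k)
    (hxapos : ∀ j, 0 < xa j j)
    (hxazero : ∀ j k, k ≠ j → xa j k = 0)
    (hxarest : ∀ j, f (xa j) j = 0) :
    (∀ i : Fin n, 0 ≤ f (fun j => if j = i then 0 else xa j j) i) ↔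
      (∀ I : Finset (Fin n), 1 ≤ I.card → I.card ≤ n - 1 → ∀ i ∈ I,
        0 ≤ f (fun j => if j ∈ I then 0 else xa j j) i) :=
  stmt5_general hn f U hU hCU hf hcomp xa hxaC
end

section
/- Let T ∈ ℝ, ε > 0, m > 0, and let g : [T,∞) → ℝ be differentiable with g(t) ≥ 0 for all t, g(T) > 0, and g'(t) ≥ m·g(t) for every t ≥ T at which g(t) < ε. Then there exists T' ≥ T such that g(t) ≥ ε for all t ≥ T'; in particular liminf_{t→∞} g(t) ≥ ε. -/
/-!
Wherever `g < ε`, the inequality `g' ≥ m g` makes `t ↦ g t * exp (-m t)` nondecreasing, so `g`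
grows at least exponentially there. Since `g T > 0`, the graph cannot stay below `ε` forever. Once
`g ≥ ε`, it cannot fall below `ε` again: after the last time it was `≥ ε`, it would grow from
a value `≥ ε`.
-/

open Set Filter Real

theorem mul_exp_le_of_mul_le_deriv {g g' : ℝ → ℝ} {a b m : ℝ} (hab : a ≤ b)
    (hg : ContinuousOn g (Icc a b)) (hg' : ∀ t ∈ Ioo a b, HasDerivAt g (g' t) t)
    (hineq : ∀ t ∈ Ioo a b, m * g t ≤ g' t) :
    g a * exp (m * (b - a)) ≤ g b := by
  have hmono : MonotoneOn (fun t => g t * exp (-(m * t))) (Icc a b) := by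
    refine monotoneOn_of_hasDerivWithinAt_nonneg (f' := fun t => (g' t - m * g t) * exp (-(m * t)))
      (convex_Icc a b) (hg.mul (by fun_prop)) (fun t ht => ?_) (fun t ht => ?_)
    all_goals rw [interior_Icc] at ht
    · have hexp : HasDerivAt (fun t => exp (-(m * t))) (exp (-(m * t)) * -m) t := by
        simpa using ((hasDerivAt_id t).const_mul m).neg.exp
      exact (((hg' t ht).mul hexp).congr_deriv (by ring)).hasDerivWithinAt
    · exact mul_nonneg (sub_nonneg.2 (hineq t ht)) (exp_pos _).le
  have hFab := hmono (left_mem_Icc.2 hab) (right_mem_Icc.2 hab) hab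
  calc g a * exp (m * (b - a)) = g a * exp (-(m * a)) * exp (m * b) := by
        rw [mul_assoc, ← exp_add]; ring_nf
    _ ≤ g b * exp (-(m * b)) * exp (m * b) := by gcongr
    _ = g b := by rw [mul_assoc, ← exp_add]; simp

theorem le_of_le_left_of_mul_le_deriv_below {g g' : ℝ → ℝ} {a b m ε : ℝ} (hm : 0 ≤ m)
    (hε : 0 ≤ ε) (hab : a ≤ b) (hg : ContinuousOn g (Icc a b))
    (hg' : ∀ t ∈ Ioo a b, HasDerivAt g (g' t) t)
    (hineq : ∀ t ∈ Ioo a b, g t < ε → m * g t ≤ g' t) (ha : ε ≤ g a) :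
    ε ≤ g b := by
  have hclosed : IsClosed (g ⁻¹' Ici ε ∩ Icc a b) :=
    inter_comm (Icc a b) _ ▸ hg.preimage_isClosed_of_isClosed isClosed_Icc isClosed_Ici
  refine hclosed.mem_of_ge_of_forall_exists_gt ha hab ?_
  rintro x ⟨hεx : ε ≤ g x, hxa, hxb⟩
  by_contra! hbelow
  have hlt : ∀ t ∈ Ioc x b, g t < ε := fun t ht => not_le.1 fun h => hbelow.subset ⟨h, ht⟩
  have hgrow := mul_exp_le_of_mul_le_deriv hxb.le (hg.mono (Icc_subset_Icc_left hxa))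
    (fun t ht => hg' t ⟨hxa.trans_lt ht.1, ht.2⟩)
    (fun t ht => hineq t ⟨hxa.trans_lt ht.1, ht.2⟩ (hlt t (Ioo_subset_Ioc_self ht)))
  have hexp : 1 ≤ exp (m * (b - x)) := one_le_exp (mul_nonneg hm (sub_nonneg.2 hxb.le))
  have hgx := le_mul_of_one_le_right (hε.trans hεx) hexp
  exact (hlt b ⟨hxb, le_rfl⟩).not_ge (by linarith)

theorem exists_le_of_mul_le_deriv_below {g g' : ℝ → ℝ} {T m ε : ℝ} (hm : 0 < m)
    (hg : ContinuousOn g (Ici T)) (hg' : ∀ t ∈ Ioi T, HasDerivAt g (g' t) t) (hT : 0 < g T)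
    (hineq : ∀ t ∈ Ioi T, g t < ε → m * g t ≤ g' t) :
    ∃ s ≥ T, ε ≤ g s := by
  by_contra! hbelow
  have hgrow : Tendsto (fun t => g T * exp (m * (t - T))) atTop atTop :=
    (tendsto_exp_atTop.comp ((tendsto_id.atTop_add tendsto_const_nhds).const_mul_atTop hm)
      ).const_mul_atTop hT
  obtain ⟨t, hεt, hTt⟩ := ((hgrow.eventually_ge_atTop ε).and (eventually_ge_atTop T)).exists
  have := mul_exp_le_of_mul_le_deriv hTt (hg.mono Icc_subset_Ici_self)
    (fun s hs => hg' s hs.1) (fun s hs => hineq s hs.1 (hbelow s hs.1.le))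
  exact (hbelow t hTt).not_ge (hεt.trans this)

theorem stmt9_general (T ε m : ℝ) (hε : 0 < ε) (hm : 0 < m)
    (g g' : ℝ → ℝ)
    (hg : ∀ t ≥ T, HasDerivWithinAt g (g' t) (Set.Ici T) t)
    (hT0 : 0 < g T)
    (hineq : ∀ t ≥ T, g t < ε → m * g t ≤ g' t) :
    (∃ T' ≥ T, ∀ t ≥ T', ε ≤ g t) ∧
    (ε : EReal) ≤ Filter.liminf (fun t => ((g t : ℝ) : EReal)) Filter.atTop := by
  have hcont : ContinuousOn g (Ici T) := fun t ht => (hg t ht).continuousWithinAt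
  have hderiv : ∀ t ∈ Ioi T, HasDerivAt g (g' t) t := fun t ht =>
    (hg t ht.le).hasDerivAt (Ici_mem_nhds ht)
  have hineq' : ∀ t ∈ Ioi T, g t < ε → m * g t ≤ g' t := fun t ht => hineq t ht.le
  obtain ⟨s, hTs, hεs⟩ := exists_le_of_mul_le_deriv_below hm hcont hderiv hT0 hineq'
  have hstay : ∀ t ≥ s, ε ≤ g t := fun t hst =>
    le_of_le_left_of_mul_le_deriv_below hm.le hε.le hst
      (hcont.mono (Icc_subset_Ici_self.trans (Ici_subset_Ici.2 hTs)))
      (fun r hr => hderiv r (hTs.trans_lt hr.1)) (fun r hr => hineq' r (hTs.trans_lt hr.1)) hεs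
  refine ⟨⟨s, hTs, hstay⟩, le_liminf_of_le (h := ?_)⟩
  filter_upwards [eventually_ge_atTop s] with t ht
  exact_mod_cast hstay t ht

/-- Persistence estimate: if `g : [T,∞) → ℝ` is differentiable, nonnegative, positive at `T`,
and satisfies `g' ≥ m·g` (with `m > 0`) at every time where `g < ε`, then from some time
`T' ≥ T` onwards `g ≥ ε`; in particular `liminf_{t→∞} g(t) ≥ ε`. -/
theorem stmt9 (T ε m : ℝ) (hε : 0 < ε) (hm : 0 < m)
    (g g' : ℝ → ℝ)
    (hg : ∀ t ≥ T, HasDerivWithinAt g (g' t) (Set.Ici T) t)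
    (hge : ∀ t ≥ T, 0 ≤ g t)
    (hT0 : 0 < g T)
    (hineq : ∀ t ≥ T, g t < ε → m * g t ≤ g' t) :
    (∃ T' ≥ T, ∀ t ≥ T', ε ≤ g t) ∧
    (ε : EReal) ≤ Filter.liminf (fun t => ((g t : ℝ) : EReal)) Filter.atTop :=
  stmt9_general T ε m hε hm g g' hg hT0 hineq
end

section
/- (Core of the Proposition on permanence.) Let f = (f_1,…,f_n) be continuous on C and let φ : [0,∞) × C → C be a semiflow (φ_0 = id, φ_{t+s} = φ_t ∘ φ_s) such that for each x ∈ C the map t ↦ φ_t x is differentiable with (d/dt)(φ_t x)_i = (φ_t x)_i · f_i(φ_t x) for every i. Suppose there exist a set U ⊆ C, forward invariant under φ and with compact closure Ū in C, and numbers ε_1,…,ε_n > 0 such that: (i) for each i, f_i(x) > 0 for every x ∈ Ū with x_i ≤ ε_i; (ii) for every x ∈ C with all coordinates strictly positive there exists T ≥ 0 with φ_t x ∈ U for all t ≥ T. Then the system is permanent: there exists ε > 0 such that for every x ∈ C with all coordinates strictly positive, liminf_{t→∞} dist(φ_t x, ∂C) ≥ ε, where ∂C = {x ∈ C : x_i =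 0 for some i} and dist is the Euclidean distance from a point to a set. -/
/-!
Along a trajectory in the open orthant each coordinate solves the scalar equation
`y' = y g` with `g(t) = f_i(φ_t x)` continuous, so it is bounded below by `y(0) e^{-Mt}` on any
compact time interval and stays positive. Once the trajectory lies in `U`, compactness of `Ū`
gives `c_i > 0` with `f_i ≥ c_i` wherever `x_i ≤ ε_i`; hence the coordinate grows at least like
`e^{c_i t}` until it reaches `ε_i`, and at level `ε_i` its derivative is positive, so it never
drops below `ε_i` again. A point whose coordinates are all `≥ e` is at distance `≥ e` from `∂C`,
so `e = min_i ε_i` works.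
-/

open Set Filter Metric Real

section ScalarODE

variable {y g : ℝ → ℝ}

theorem mul_exp_le_of_hasDerivWithinAt_mul {a b m : ℝ} (hab : a ≤ b)
    (hy : ∀ t ∈ Icc a b, HasDerivWithinAt y (y t * g t) (Icc a b) t)
    (hy_nonneg : ∀ t ∈ Icc a b, 0 ≤ y t) (hg : ∀ t ∈ Icc a b, m ≤ g t) :
    y a * exp (m * (b - a)) ≤ y b := by
  have hderiv : ∀ t ∈ Icc a b, HasDerivWithinAt (fun s => y s * exp (-(m * s)))
      (y t * exp (-(m * t)) * (g t - m)) (Icc a b) t := by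
    intro t ht
    have hexp : HasDerivWithinAt (fun s => exp (-(m * s))) (exp (-(m * t)) * -(m * 1))
        (Icc a b) t :=
      ((hasDerivAt_id' t).const_mul m).neg.exp.hasDerivWithinAt
    exact ((hy t ht).mul hexp).congr_deriv (by ring)
  have hmono : MonotoneOn (fun s => y s * exp (-(m * s))) (Icc a b) :=
    monotoneOn_of_hasDerivWithinAt_nonneg (convex_Icc a b)
      (fun t ht => (hderiv t ht).continuousWithinAt)
      (fun t ht => (hderiv t (interior_subset ht)).mono interior_subset)
      (fun t ht => mul_nonneg (mul_nonneg (hy_nonneg t (interior_subset ht)) (exp_pos _).le)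
        (sub_nonneg.2 (hg t (interior_subset ht))))
  calc y a * exp (m * (b - a)) = y a * exp (-(m * a)) * exp (m * b) := by
        rw [mul_assoc, ← exp_add]; ring_nf
    _ ≤ y b * exp (-(m * b)) * exp (m * b) :=
        mul_le_mul_of_nonneg_right (hmono (left_mem_Icc.2 hab) (right_mem_Icc.2 hab) hab)
          (exp_pos _).le
    _ = y b := by rw [mul_assoc, ← exp_add, neg_add_cancel, exp_zero, mul_one]

theorem pos_of_hasDerivWithinAt_mul {a b : ℝ} (hab : a ≤ b)
    (hy : ∀ t ∈ Icc a b, HasDerivWithinAt y (y t * g t) (Icc a b) t)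
    (hy_nonneg : ∀ t ∈ Icc a b, 0 ≤ y t) (hg : ContinuousOn g (Icc a b)) (ha : 0 < y a) :
    0 < y b := by
  obtain ⟨m, hm⟩ := isCompact_Icc.bddBelow_image hg
  exact (mul_pos ha (exp_pos _)).trans_le
    (mul_exp_le_of_hasDerivWithinAt_mul hab hy hy_nonneg fun t ht => hm (mem_image_of_mem g ht))

variable {T ε : ℝ}

theorem exists_le_of_hasDerivWithinAt_mul {c : ℝ}
    (hy : ∀ t ≥ T, HasDerivWithinAt y (y t * g t) (Ici T) t) (hy_nonneg : ∀ t ≥ T, 0 ≤ y t)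
    (hyT : 0 < y T) (hc : 0 < c) (hgc : ∀ t ≥ T, y t ≤ ε → c ≤ g t) :
    ∃ t ≥ T, ε ≤ y t := by
  by_contra! hlt
  have hε : 0 < ε := hyT.trans (hlt T le_rfl)
  set t := T + ε / (c * y T)
  have hTt : T ≤ t := le_add_of_nonneg_right (by positivity)
  have hgrowth := mul_exp_le_of_hasDerivWithinAt_mul hTt
    (fun s hs => (hy s hs.1).mono Icc_subset_Ici_self) (fun s hs => hy_nonneg s hs.1)
    (fun s hs => hgc s hs.1 (hlt s hs.1).le)
  have hexponent : c * (t - T) = ε / y T := by simp only [t, add_sub_cancel_left]; field_simp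
  -- `e^s ≥ 1 + s` already pushes `y T * e^{c (t - T)}` past `ε`.
  have hεt : ε < y t := calc
    ε < ε + y T := lt_add_of_pos_right ε hyT
    _ = y T * (ε / y T + 1) := by field_simp
    _ ≤ y T * exp (c * (t - T)) := by rw [hexponent]; gcongr; exact add_one_le_exp _
    _ ≤ y t := hgrowth
  exact (hlt t hTt).not_gt hεt

theorem le_of_hasDerivWithinAt_mul_of_le
    (hy : ∀ t ≥ T, HasDerivWithinAt y (y t * g t) (Ici T) t) (hε : 0 < ε)
    (hg : ∀ t ≥ T, y t = ε → 0 < g t) {t₀ : ℝ} (ht₀ : T ≤ t₀) (h₀ : ε ≤ y t₀) :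
    ∀ t ≥ t₀, ε ≤ y t := by
  intro t ht
  have hcont : ContinuousOn (fun s => -y s) (Icc t₀ t) := fun s hs =>
    ((hy s (ht₀.trans hs.1)).continuousWithinAt.mono
      (Icc_subset_Ici_self.trans (Ici_subset_Ici.2 ht₀))).neg
  have hderiv : ∀ s ∈ Ico t₀ t, HasDerivWithinAt (fun s => -y s) (-(y s * g s)) (Ici s) s :=
    fun s hs => ((hy s (ht₀.trans hs.1)).mono (Ici_subset_Ici.2 (ht₀.trans hs.1))).neg
  have hbarrier := image_le_of_deriv_right_lt_deriv_boundary (B := fun _ => -ε) (B' := 0)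
    hcont hderiv (neg_le_neg h₀) (fun _ => hasDerivAt_const _ _)
    (fun s hs hys => neg_lt_zero.2 <| mul_pos ((neg_inj.1 hys).symm ▸ hε)
      (hg s (ht₀.trans hs.1) (neg_inj.1 hys))) ⟨ht, le_rfl⟩
  exact neg_le_neg_iff.1 hbarrier

theorem eventually_le_of_hasDerivWithinAt_mul {c : ℝ}
    (hy : ∀ t ≥ 0, HasDerivWithinAt y (y t * g t) (Ici 0) t) (hy_nonneg : ∀ t ≥ 0, 0 ≤ y t)
    (hg : ContinuousOn g (Ici 0)) (hy0 : 0 < y 0) (hT : 0 ≤ T) (hc : 0 < c) (hε : 0 < ε)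
    (hgc : ∀ t ≥ T, y t ≤ ε → c ≤ g t) :
    ∀ᶠ t in atTop, ε ≤ y t := by
  have hyT : 0 < y T := pos_of_hasDerivWithinAt_mul hT
    (fun t ht => (hy t ht.1).mono Icc_subset_Ici_self) (fun t ht => hy_nonneg t ht.1)
    (hg.mono Icc_subset_Ici_self) hy0
  have hyT' : ∀ t ≥ T, HasDerivWithinAt y (y t * g t) (Ici T) t :=
    fun t ht => (hy t (hT.trans ht)).mono (Ici_subset_Ici.2 hT)
  obtain ⟨t₀, ht₀, h₀⟩ := exists_le_of_hasDerivWithinAt_mul hyT'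
    (fun t ht => hy_nonneg t (hT.trans ht)) hyT hc hgc
  exact eventually_atTop.2 ⟨t₀, le_of_hasDerivWithinAt_mul_of_le hyT' hε
    (fun t ht hyt => hc.trans_le (hgc t ht hyt.le)) ht₀ h₀⟩

end ScalarODE

theorem le_infDist_orthant_boundary {ι : Type*} [Fintype ι] [Nonempty ι]
    {x : EuclideanSpace ℝ ι} {e : ℝ} (hx : ∀ i, e ≤ x i) :
    e ≤ infDist x {y : EuclideanSpace ℝ ι | (∀ i, 0 ≤ y i) ∧ ∃ i, y i = 0} := by
  refine (le_infDist ?_).2 ?_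
  · exact ⟨0, fun _ => le_rfl, Classical.arbitrary ι, rfl⟩
  rintro y ⟨-, j, hj⟩
  calc e ≤ x j - y j := by rw [hj, sub_zero]; exact hx j
    _ ≤ dist (x j) (y j) := le_abs_self _
    _ ≤ dist x y := PiLp.dist_apply_le x y j

theorem stmt10_general {n : ℕ} (hn : 0 < n)
    (f : EuclideanSpace ℝ (Fin n) → Fin n → ℝ)
    (hf : ContinuousOn f {x : EuclideanSpace ℝ (Fin n) | ∀ i, 0 ≤ x i})
    (φ : ℝ → EuclideanSpace ℝ (Fin n) → EuclideanSpace ℝ (Fin n))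
    (hφC : ∀ t ≥ (0 : ℝ), ∀ x : EuclideanSpace ℝ (Fin n),
      (∀ i, 0 ≤ x i) → ∀ i, 0 ≤ φ t x i)
    (hφ0 : ∀ x : EuclideanSpace ℝ (Fin n), (∀ i, 0 ≤ x i) → φ 0 x = x)
    (hode : ∀ x : EuclideanSpace ℝ (Fin n), (∀ i, 0 ≤ x i) → ∀ i : Fin n, ∀ t ≥ (0 : ℝ),
      HasDerivWithinAt (fun s => φ s x i) (φ t x i * f (φ t x) i) (Set.Ici 0) t)
    (U : Set (EuclideanSpace ℝ (Fin n)))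
    (hUcomp : IsCompact (closure U))
    (hUcl : closure U ⊆ {x : EuclideanSpace ℝ (Fin n) | ∀ i, 0 ≤ x i})
    (ε : Fin n → ℝ) (hε : ∀ i, 0 < ε i)
    (hfpos : ∀ i : Fin n, ∀ x ∈ closure U, x i ≤ ε i → 0 < f x i)
    (habs : ∀ x : EuclideanSpace ℝ (Fin n), (∀ i, 0 < x i) →
      ∃ T ≥ (0 : ℝ), ∀ t ≥ T, φ t x ∈ U) :
    ∃ e > (0 : ℝ), ∀ x : EuclideanSpace ℝ (Fin n), (∀ i, 0 < x i) →
      (e : EReal) ≤ Filter.liminf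
        (fun t => ((Metric.infDist (φ t x)
          {y : EuclideanSpace ℝ (Fin n) | (∀ i, 0 ≤ y i) ∧ ∃ i, y i = 0} : ℝ) : EReal))
        Filter.atTop := by
  have : Nonempty (Fin n) := ⟨⟨0, hn⟩⟩
  have hc : ∀ i, ∃ c > 0, ∀ z ∈ closure U, z i ≤ ε i → c ≤ f z i := fun i => by
    obtain ⟨c, hc, hcf⟩ := (hUcomp.inter_right (isClosed_le (EuclideanSpace.proj i).continuous continuous_const)
      ).exists_forall_le' ((continuous_apply i).comp_continuousOn (hf.mono fun z hz => hUcl hz.1))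
      fun z hz => hfpos i z hz.1 hz.2
    exact ⟨c, hc, fun z hz hzi => hcf z ⟨hz, hzi⟩⟩
  choose c hc_pos hc using hc
  refine ⟨Finset.univ.inf' Finset.univ_nonempty ε,
    (Finset.lt_inf'_iff _).2 fun i _ => hε i, fun x hx => ?_⟩
  have hxC : ∀ i, 0 ≤ x i := fun i => (hx i).le
  obtain ⟨T, hT, hTU⟩ := habs x hx
  have htraj : ContinuousOn (fun t => φ t x) (Ici 0) :=
    (PiLp.continuous_toLp 2 _).comp_continuousOn
      (continuousOn_pi.2 fun i t ht => (hode x hxC i t ht).continuousWithinAt)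
  have hcoord : ∀ i, ∀ᶠ t in atTop, ε i ≤ φ t x i := fun i =>
    eventually_le_of_hasDerivWithinAt_mul (hode x hxC i) (fun t ht => hφC t ht x hxC i)
      ((continuous_apply i).comp_continuousOn (hf.comp htraj fun t ht => hφC t ht x hxC))
      (by rw [hφ0 x hxC]; exact hx i) hT (hc_pos i) (hε i)
      (fun t ht hle => hc i _ (subset_closure (hTU t ht)) hle)
  refine le_liminf_of_le (by isBoundedDefault) ((eventually_all.2 hcoord).mono fun t ht => ?_)
  exact EReal.coe_le_coe_iff.2
    (le_infDist_orthant_boundary fun i => (Finset.inf'_le _ (Finset.mem_univ i)).trans (ht i))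

/-- Core of the Proposition on permanence.  Let `φ` be a semiflow on the nonnegative orthant
`C ⊆ ℝⁿ` whose trajectories solve `ẋ_i = x_i f_i(x)` with `f` continuous on `C`.  If there are
a forward invariant set `U ⊆ C` with compact closure contained in `C` and numbers `ε_i > 0`
such that `f_i > 0` on `{x ∈ closure U : x_i ≤ ε_i}`, and every trajectory starting in the
open orthant eventually stays in `U`, then the system is permanent: there is `e > 0` with
`liminf_{t→∞} dist(φ_t x, ∂C) ≥ e` for every `x` in the open orthant (`dist` the Euclidean
distance from a point to a set, `∂C = {x ∈ C : x_i = 0 for some i}`). -/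
theorem stmt10 {n : ℕ} (hn : 0 < n)
    (f : EuclideanSpace ℝ (Fin n) → Fin n → ℝ)
    (hf : ContinuousOn f {x : EuclideanSpace ℝ (Fin n) | ∀ i, 0 ≤ x i})
    (φ : ℝ → EuclideanSpace ℝ (Fin n) → EuclideanSpace ℝ (Fin n))
    (hφC : ∀ t ≥ (0 : ℝ), ∀ x : EuclideanSpace ℝ (Fin n),
      (∀ i, 0 ≤ x i) → ∀ i, 0 ≤ φ t x i)
    (hφ0 : ∀ x : EuclideanSpace ℝ (Fin n), (∀ i, 0 ≤ x i) → φ 0 x = x)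
    (hφsemi : ∀ s ≥ (0 : ℝ), ∀ t ≥ (0 : ℝ), ∀ x : EuclideanSpace ℝ (Fin n),
      (∀ i, 0 ≤ x i) → φ (t + s) x = φ t (φ s x))
    (hode : ∀ x : EuclideanSpace ℝ (Fin n), (∀ i, 0 ≤ x i) → ∀ i : Fin n, ∀ t ≥ (0 : ℝ),
      HasDerivWithinAt (fun s => φ s x i) (φ t x i * f (φ t x) i) (Set.Ici 0) t)
    (U : Set (EuclideanSpace ℝ (Fin n)))
    (hUC : U ⊆ {x : EuclideanSpace ℝ (Fin n) | ∀ i, 0 ≤ x i})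
    (hUinv : ∀ t ≥ (0 : ℝ), ∀ x ∈ U, φ t x ∈ U)
    (hUcomp : IsCompact (closure U))
    (hUcl : closure U ⊆ {x : EuclideanSpace ℝ (Fin n) | ∀ i, 0 ≤ x i})
    (ε : Fin n → ℝ) (hε : ∀ i, 0 < ε i)
    (hfpos : ∀ i : Fin n, ∀ x ∈ closure U, x i ≤ ε i → 0 < f x i)
    (habs : ∀ x : EuclideanSpace ℝ (Fin n), (∀ i, 0 < x i) →
      ∃ T ≥ (0 : ℝ), ∀ t ≥ T, φ t x ∈ U) :
    ∃ e > (0 : ℝ), ∀ x : EuclideanSpace ℝ (Fin n), (∀ i, 0 < x i) →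
      (e : EReal) ≤ Filter.liminf
        (fun t => ((Metric.infDist (φ t x)
          {y : EuclideanSpace ℝ (Fin n) | (∀ i, 0 ≤ y i) ∧ ∃ i, y i = 0} : ℝ) : EReal))
        Filter.atTop :=
  stmt10_general hn f hf φ hφC hφ0 hode U hUcomp hUcl ε hε hfpos habs
end

section
/- Let f be C¹ on an open neighborhood of C, let φ : [0,∞) × C → C be a continuous semiflow whose trajectories solve ẋ_i = x_i f_i(x) (so that, in particular, for any solution and any index i, the i-th coordinate vanishes at one time iff it vanishes at all times). Fix I ⊆ {1,…,n} and set C_I := {x ∈ C : x_i = 0 for i ∈ I}. Suppose Γ ⊆ C is compact, satisfies φ_t(Γ) = Γ for all t ≥ 0, and ω(D) is nonempty and contained in Γ for every nonempty bounded D ⊆ C (where ω denotes the omega-limit set with respect to φ). Then Γ_I := Γ ∩ C_I is compact, φ_t(Γ_I) = Γ_I for all t ≥ 0, and for every nonempty bounded D ⊆ C_I the set ω(D) is nonempty and contained in Γ_I. (If (E) is dissipative, so are all its subsystems (E)_I, and the global attractor of (E)_I equals Γ ∩ C_I.) -/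
/-- The omega-limit set of a set `D` under a semiflow `φ`:
`ω(D) = ⋂_{s ≥ 0} closure (⋃_{t ≥ s} φ_t(D))`. -/
def omegaLimitE {n : ℕ} (φ : ℝ → (Fin n → ℝ) → (Fin n → ℝ))
    (D : Set (Fin n → ℝ)) : Set (Fin n → ℝ) :=
  ⋂ s ∈ Set.Ici (0 : ℝ), closure (⋃ t ∈ Set.Ici s, φ t '' D)

/-!
Each coordinate `y = x_i` of a trajectory solves the linear scalar equation `y' = y · f_i(x(t))`,
so by uniqueness (forward and backward in time) it vanishes at some time `t ≥ 0` iff it vanishes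
at time `0`. Hence the face `C_I` is closed and both forward and backward invariant inside `C`:
`φ_t` maps `Γ ∩ C_I` onto `φ_t(Γ) ∩ C_I = Γ ∩ C_I`, and the orbit of a set `D ⊆ C_I` stays in the
closed set `C_I`, so `ω(D) ⊆ Γ ∩ C_I`.
-/

open Set

lemma eq_zero_iff_of_hasDerivWithinAt_mul {y g : ℝ → ℝ} {a b : ℝ} (hab : a ≤ b)
    (hg : ContinuousOn g (Icc a b))
    (hy : ∀ t ∈ Icc a b, HasDerivWithinAt y (y t * g t) (Ici a) t) :
    y b = 0 ↔ y a = 0 := by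
  obtain ⟨C, hC⟩ := isCompact_Icc.exists_bound_of_continuousOn hg
  have hlip : ∀ t ∈ Icc a b, LipschitzOnWith C.toNNReal (fun x : ℝ => x * g t) univ := by
    intro t ht
    have hgt : ‖g t‖₊ ≤ C.toNNReal := by
      rw [← NNReal.coe_le_coe, coe_nnnorm, Real.coe_toNNReal']
      exact (hC t ht).trans (le_max_left _ _)
    simpa only [smul_eq_mul, mul_comm (g t)] using
      ((lipschitzWith_smul (β := ℝ) (g t)).weaken hgt).lipschitzOnWith (s := univ)
  have hycont : ContinuousOn y (Icc a b) := fun t ht =>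
    (hy t ht).continuousWithinAt.mono Icc_subset_Ici_self
  have hzero (s : Set ℝ) (t : ℝ) : HasDerivWithinAt (fun _ => (0 : ℝ)) (0 * g t) s t := by
    simpa only [zero_mul] using hasDerivWithinAt_const t s (0 : ℝ)
  have hb : b ∈ Icc a b := right_mem_Icc.2 hab
  have ha : a ∈ Icc a b := left_mem_Icc.2 hab
  constructor
  · intro hyb
    refine ODE_solution_unique_of_mem_Icc_left (fun t ht => hlip t (Ioc_subset_Icc_self ht))
      hycont (fun t ht => ?_) (fun _ _ => mem_univ _) continuousOn_const
      (fun t _ => hzero _ t) (fun _ _ => mem_univ _) hyb ha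
    -- at an interior time the one-sided derivative on `Ici a` is a genuine derivative
    exact ((hy t (Ioc_subset_Icc_self ht)).hasDerivAt (Ici_mem_nhds ht.1)).hasDerivWithinAt
  · intro hya
    exact ODE_solution_unique_of_mem_Icc_right (fun t ht => hlip t (Ico_subset_Icc_self ht))
      hycont (fun t ht => (hy t (Ico_subset_Icc_self ht)).mono (Ici_subset_Ici.2 ht.1))
      (fun _ _ => mem_univ _) continuousOn_const (fun t _ => hzero _ t) (fun _ _ => mem_univ _)
      hya hb

section Semiflow

variable {n : ℕ} {φ : ℝ → (Fin n → ℝ) → (Fin n → ℝ)}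

lemma semiflow_apply_eq_zero_iff {f : (Fin n → ℝ) → (Fin n → ℝ)}
    (hf : ContinuousOn f {x : Fin n → ℝ | ∀ k, 0 ≤ x k})
    (hφcont : ContinuousOn (fun p : ℝ × (Fin n → ℝ) => φ p.1 p.2)
      (Ici 0 ×ˢ {x : Fin n → ℝ | ∀ k, 0 ≤ x k}))
    (hφC : ∀ t ≥ (0 : ℝ), ∀ x : Fin n → ℝ, (∀ k, 0 ≤ x k) → ∀ k, 0 ≤ φ t x k)
    (hφ0 : ∀ x : Fin n → ℝ, (∀ k, 0 ≤ x k) → φ 0 x = x)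
    (hode : ∀ x : Fin n → ℝ, (∀ k, 0 ≤ x k) → ∀ i : Fin n, ∀ t ≥ (0 : ℝ),
      HasDerivWithinAt (fun s => φ s x i) (φ t x i * f (φ t x) i) (Ici 0) t)
    {x : Fin n → ℝ} (hx : ∀ k, 0 ≤ x k) (i : Fin n) {t : ℝ} (ht : 0 ≤ t) :
    φ t x i = 0 ↔ x i = 0 := by
  have htraj : ContinuousOn (fun s => φ s x) (Icc 0 t) :=
    hφcont.comp (Continuous.prodMk_left x).continuousOn fun s hs => ⟨hs.1, hx⟩
  have hg : ContinuousOn (fun s => f (φ s x) i) (Icc 0 t) :=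
    (continuous_apply i).comp_continuousOn (hf.comp htraj fun s hs => hφC s hs.1 x hx)
  have h := eq_zero_iff_of_hasDerivWithinAt_mul ht hg fun s hs => hode x hx i s hs.1
  rwa [hφ0 x hx] at h

lemma isClosed_face (I : Set (Fin n)) :
    IsClosed {x : Fin n → ℝ | (∀ k, 0 ≤ x k) ∧ ∀ i ∈ I, x i = 0} := by
  simp only [ofPred_and, ofPred_forall]
  exact (isClosed_iInter fun k => isClosed_le continuous_const (continuous_apply k)).inter
    (isClosed_biInter fun i _ => isClosed_eq (continuous_apply i) continuous_const)

lemma omegaLimitE_subset_of_mapsTo {S D : Set (Fin n → ℝ)} (hS : IsClosed S) (hD : D ⊆ S)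
    (hφS : ∀ t ≥ (0 : ℝ), MapsTo (φ t) S S) : omegaLimitE φ D ⊆ S := by
  refine (biInter_subset_of_mem (self_mem_Ici (a := (0 : ℝ)))).trans
    (hS.closure_subset_iff.2 (iUnion₂_subset fun t ht => ?_))
  exact image_subset_iff.2 fun x hx => hφS t ht (hD hx)

end Semiflow

lemma Set.image_inter_of_forall_mem_iff {α : Type*} (g : α → α) {Γ S : Set α}
    (hS : ∀ x ∈ Γ, g x ∈ S ↔ x ∈ S) : g '' (Γ ∩ S) = g '' Γ ∩ S := by
  rw [← image_inter_preimage]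
  congr 1
  ext x
  exact and_congr_right fun hx => (hS x hx).symm

theorem stmt11_general {n : ℕ} (f : (Fin n → ℝ) → (Fin n → ℝ)) (U : Set (Fin n → ℝ))
    (hCU : {x : Fin n → ℝ | ∀ k, 0 ≤ x k} ⊆ U)
    (hf : ContDiffOn ℝ 1 f U)
    (φ : ℝ → (Fin n → ℝ) → (Fin n → ℝ))
    (hφcont : ContinuousOn (fun p : ℝ × (Fin n → ℝ) => φ p.1 p.2)
      (Set.Ici 0 ×ˢ {x : Fin n → ℝ | ∀ k, 0 ≤ x k}))
    (hφC : ∀ t ≥ (0 : ℝ), ∀ x : Fin n → ℝ, (∀ k, 0 ≤ x k) → ∀ k, 0 ≤ φ t x k)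
    (hφ0 : ∀ x : Fin n → ℝ, (∀ k, 0 ≤ x k) → φ 0 x = x)
    (hode : ∀ x : Fin n → ℝ, (∀ k, 0 ≤ x k) → ∀ i : Fin n, ∀ t ≥ (0 : ℝ),
      HasDerivWithinAt (fun s => φ s x i) (φ t x i * f (φ t x) i) (Set.Ici 0) t)
    (I : Set (Fin n))
    (Γ : Set (Fin n → ℝ)) (hΓC : Γ ⊆ {x : Fin n → ℝ | ∀ k, 0 ≤ x k})
    (hΓcomp : IsCompact Γ)
    (hΓinv : ∀ t ≥ (0 : ℝ), φ t '' Γ = Γ)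
    (hattr : ∀ D : Set (Fin n → ℝ), D ⊆ {x : Fin n → ℝ | ∀ k, 0 ≤ x k} →
      D.Nonempty → Bornology.IsBounded D →
      (omegaLimitE φ D).Nonempty ∧ omegaLimitE φ D ⊆ Γ) :
    IsCompact (Γ ∩ {x : Fin n → ℝ | (∀ k, 0 ≤ x k) ∧ ∀ i' ∈ I, x i' = 0}) ∧
    (∀ t ≥ (0 : ℝ),
      φ t '' (Γ ∩ {x : Fin n → ℝ | (∀ k, 0 ≤ x k) ∧ ∀ i' ∈ I, x i' = 0}) =
        Γ ∩ {x : Fin n → ℝ | (∀ k, 0 ≤ x k) ∧ ∀ i' ∈ I, x i' = 0}) ∧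
    (∀ D : Set (Fin n → ℝ),
      D ⊆ {x : Fin n → ℝ | (∀ k, 0 ≤ x k) ∧ ∀ i' ∈ I, x i' = 0} →
      D.Nonempty → Bornology.IsBounded D →
      (omegaLimitE φ D).Nonempty ∧
        omegaLimitE φ D ⊆ Γ ∩ {x : Fin n → ℝ | (∀ k, 0 ≤ x k) ∧ ∀ i' ∈ I, x i' = 0}) := by
  have hface : ∀ t ≥ (0 : ℝ), ∀ x : Fin n → ℝ, (∀ k, 0 ≤ x k) →
      (φ t x ∈ {x : Fin n → ℝ | (∀ k, 0 ≤ x k) ∧ ∀ i' ∈ I, x i' = 0} ↔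
        x ∈ {x : Fin n → ℝ | (∀ k, 0 ≤ x k) ∧ ∀ i' ∈ I, x i' = 0}) := fun t ht x hx => by
    simp only [mem_ofPred_eq, hφC t ht x hx, hx,
      semiflow_apply_eq_zero_iff (hf.continuousOn.mono hCU) hφcont hφC hφ0 hode hx _ ht,
      implies_true, true_and]
  refine ⟨hΓcomp.inter_right (isClosed_face I), fun t ht => ?_, fun D hD hne hbd => ?_⟩
  · rw [image_inter_of_forall_mem_iff _ fun x hx => hface t ht x (hΓC hx), hΓinv t ht]
  · obtain ⟨hωne, hωΓ⟩ := hattr D (fun x hx => (hD hx).1) hne hbd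
    exact ⟨hωne, subset_inter hωΓ <| omegaLimitE_subset_of_mapsTo (isClosed_face I) hD
      fun t ht x hx => (hface t ht x hx.1).2 hx⟩

/-- If (E) is dissipative, so are all its subsystems (E)_I, and the global attractor of
(E)_I equals `Γ ∩ C_I`: if `φ` is a continuous semiflow on `C` whose trajectories solve
`ẋ_i = x_i f_i(x)` (with `f` `C¹` near `C`), `Γ ⊆ C` is compact, fully invariant
(`φ_t(Γ) = Γ`), and attracts all bounded subsets of `C` (their omega-limit sets are nonempty
and contained in `Γ`), then `Γ_I = Γ ∩ C_I` is compact, satisfies `φ_t(Γ_I) = Γ_I` for all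
`t ≥ 0`, and `ω(D)` is nonempty and contained in `Γ_I` for every nonempty bounded `D ⊆ C_I`. -/
theorem stmt11 {n : ℕ} (f : (Fin n → ℝ) → (Fin n → ℝ)) (U : Set (Fin n → ℝ))
    (hU : IsOpen U) (hCU : {x : Fin n → ℝ | ∀ k, 0 ≤ x k} ⊆ U)
    (hf : ContDiffOn ℝ 1 f U)
    (φ : ℝ → (Fin n → ℝ) → (Fin n → ℝ))
    (hφcont : ContinuousOn (fun p : ℝ × (Fin n → ℝ) => φ p.1 p.2)
      (Set.Ici 0 ×ˢ {x : Fin n → ℝ | ∀ k, 0 ≤ x k}))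
    (hφC : ∀ t ≥ (0 : ℝ), ∀ x : Fin n → ℝ, (∀ k, 0 ≤ x k) → ∀ k, 0 ≤ φ t x k)
    (hφ0 : ∀ x : Fin n → ℝ, (∀ k, 0 ≤ x k) → φ 0 x = x)
    (hφsemi : ∀ s ≥ (0 : ℝ), ∀ t ≥ (0 : ℝ), ∀ x : Fin n → ℝ,
      (∀ k, 0 ≤ x k) → φ (t + s) x = φ t (φ s x))
    (hode : ∀ x : Fin n → ℝ, (∀ k, 0 ≤ x k) → ∀ i : Fin n, ∀ t ≥ (0 : ℝ),
      HasDerivWithinAt (fun s => φ s x i) (φ t x i * f (φ t x) i) (Set.Ici 0) t)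
    (I : Set (Fin n))
    (Γ : Set (Fin n → ℝ)) (hΓC : Γ ⊆ {x : Fin n → ℝ | ∀ k, 0 ≤ x k})
    (hΓcomp : IsCompact Γ)
    (hΓinv : ∀ t ≥ (0 : ℝ), φ t '' Γ = Γ)
    (hattr : ∀ D : Set (Fin n → ℝ), D ⊆ {x : Fin n → ℝ | ∀ k, 0 ≤ x k} →
      D.Nonempty → Bornology.IsBounded D →
      (omegaLimitE φ D).Nonempty ∧ omegaLimitE φ D ⊆ Γ) :
    IsCompact (Γ ∩ {x : Fin n → ℝ | (∀ k, 0 ≤ x k) ∧ ∀ i' ∈ I, x i' = 0}) ∧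
    (∀ t ≥ (0 : ℝ),
      φ t '' (Γ ∩ {x : Fin n → ℝ | (∀ k, 0 ≤ x k) ∧ ∀ i' ∈ I, x i' = 0}) =
        Γ ∩ {x : Fin n → ℝ | (∀ k, 0 ≤ x k) ∧ ∀ i' ∈ I, x i' = 0}) ∧
    (∀ D : Set (Fin n → ℝ),
      D ⊆ {x : Fin n → ℝ | (∀ k, 0 ≤ x k) ∧ ∀ i' ∈ I, x i' = 0} →
      D.Nonempty → Bornology.IsBounded D →
      (omegaLimitE φ D).Nonempty ∧
        omegaLimitE φ D ⊆ Γ ∩ {x : Fin n → ℝ | (∀ k, 0 ≤ x k) ∧ ∀ i' ∈ I, x i' = 0}) :=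
  stmt11_general f U hCU hf φ hφcont hφC hφ0 hode I Γ hΓC hΓcomp hΓinv hattr
end

section
/- For the May–Leonard system with parameters α, β ∈ ℝ, α ≠ β, let F be the vector field F(x) = (x_1(1 − x_1 − αx_2 − βx_3), x_2(1 − βx_1 − x_2 − αx_3), x_3(1 − αx_1 − βx_2 − x_3)), and let y = (c,c,c) with c = 1/(1+α+β) (assuming 1+α+β ≠ 0) be the interior rest point. Then the eigenvalues of the Jacobian DF(y), viewed over ℂ, are −1 and the complex-conjugate pair μ = −(1 + αω + βω²)/(1+α+β), μ̄ = −(1 + αω² + βω)/(1+α+β), where ω = e^{2πi/3}; each of μ, μ̄ has real part (α + β − 2)/(2(1+α+β)). In particular, if 0 < β < 1 < α and α + β > 2, then DF(y) has one negative real eigenvalue −1 and a pair of complex eigenvalues with strictly positive real part. -/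
/-!
At the interior rest point `y = (c, c, c)` the May–Leonard field is a Lotka–Volterra field
`x ↦ x ∘ (1 - A x)` with `A y = 1`, so its Jacobian there is `-diag(y) A = -c A`, a circulant
matrix. A `3 × 3` circulant with first row `(a, b, d)` is diagonalised by the discrete Fourier
vectors `(1, ω^k, ω^{2k})`, so its eigenvalues are `a + b + d`, `a + bω + dω²` and
`a + bω² + dω`; only `ω² + ω + 1 = 0` is needed to check the factorisation of the
characteristic polynomial. For `μ = -(1 + αω + βω²)/(1 + α + β)` one has
`μ + μ̄ = (α + β - 2)/(1 + α + β)` and `μ̄ - μ = (α - β)(ω - ω²)/(1 + α + β)`, which give the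
real part and show that `μ` is not real when `α ≠ β`.
-/

open Matrix Polynomial

namespace IsPrimitiveRoot

theorem sq_add_self_add_one {R : Type*} [CommRing R] [IsDomain R] {ω : R}
    (hω : IsPrimitiveRoot ω 3) : ω ^ 2 + ω + 1 = 0 := by
  have h := hω.geom_sum_eq_zero (by norm_num)
  simp only [Finset.sum_range_succ, Finset.range_zero, Finset.sum_empty, pow_zero, pow_one] at h
  linear_combination h

theorem sq_ne_self {R : Type*} [CommRing R] {ω : R} (hω : IsPrimitiveRoot ω 3) : ω ^ 2 ≠ ω := by
  intro h
  have := hω.pow_inj (i := 2) (j := 1) (by norm_num) (by norm_num) (by rwa [pow_one])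
  omega

theorem conj_eq_sq {ω : ℂ} (hω : IsPrimitiveRoot ω 3) : starRingEnd ℂ ω = ω ^ 2 := by
  rw [← Complex.inv_eq_conj (hω.norm'_eq_one three_ne_zero)]
  exact inv_eq_of_mul_eq_one_right (by rw [← pow_succ', hω.pow_eq_one])

end IsPrimitiveRoot

-- `circulant v` has entries `v (i - j)`, so the first row of `circulant ![a, d, b]` is `(a, b, d)`.
theorem Matrix.charpoly_circulant_fin_three {R : Type*} [CommRing R] {ω : R}
    (hω : ω ^ 2 + ω + 1 = 0) (a b d : R) :
    (circulant ![a, d, b]).charpoly =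
      (X - C (a + b + d)) * (X - C (a + b * ω + d * ω ^ 2)) *
        (X - C (a + b * ω ^ 2 + d * ω)) := by
  have hsum : (a + b * ω + d * ω ^ 2) + (a + b * ω ^ 2 + d * ω) = 2 * a - b - d := by
    linear_combination (b + d) * hω
  have hprod : (a + b * ω + d * ω ^ 2) * (a + b * ω ^ 2 + d * ω) =
      a ^ 2 + b ^ 2 + d ^ 2 - a * b - a * d - b * d := by
    linear_combination (a * b + a * d + (b ^ 2 + d ^ 2) * (ω - 1) + b * d * (ω ^ 2 - ω + 1)) * hω
  have hquad : ∀ u v : R, (X - C u) * (X - C v) = X ^ 2 - C (u + v) * X + C (u * v) := by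
    intro u v
    simp only [map_add, map_mul]
    ring
  rw [mul_assoc, hquad, hsum, hprod, charpoly, det_fin_three]
  simp [circulant_apply, map_ofNat]
  ring

section LotkaVolterra

variable {ι : Type*} [Fintype ι]

def lotkaVolterra (r : ι → ℝ) (A : Matrix ι ι ℝ) (x : ι → ℝ) : ι → ℝ :=
  fun i => x i * (r i - (A *ᵥ x) i)

variable [DecidableEq ι]

theorem lotkaVolterra_jacobian (r : ι → ℝ) (A : Matrix ι ι ℝ) (x : ι → ℝ) :
    (of fun i j => fderiv ℝ (fun y => lotkaVolterra r A y i) x (Pi.single j 1)) =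
      diagonal (r - A *ᵥ x) - diagonal x * A := by
  ext i j
  let L : (ι → ℝ) →L[ℝ] ℝ :=
    (ContinuousLinearMap.proj i).comp (mulVecLin A).toContinuousLinearMap
  have hAx : HasFDerivAt (fun y => (A *ᵥ y) i) L x := L.hasFDerivAt
  have hderiv := ((hasFDerivAt_apply i x).fun_mul (hAx.const_sub (r i))).fderiv
  simp only [lotkaVolterra, of_apply, hderiv]
  simp [L, diagonal_apply, Pi.single_apply, diagonal_mul]
  ring

theorem lotkaVolterra_jacobian_of_mulVec_eq {r : ι → ℝ} {A : Matrix ι ι ℝ} {x : ι → ℝ}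
    (hx : A *ᵥ x = r) :
    (of fun i j => fderiv ℝ (fun y => lotkaVolterra r A y i) x (Pi.single j 1)) =
      -(diagonal x * A) := by
  rw [lotkaVolterra_jacobian, hx, sub_self, diagonal_zero', zero_sub]

end LotkaVolterra

section MayLeonard

variable (α β : ℝ)

theorem mayLeonard_eq_lotkaVolterra :
    (fun x : Fin 3 → ℝ => ![x 0 * (1 - x 0 - α * x 1 - β * x 2),
                            x 1 * (1 - β * x 0 - x 1 - α * x 2),
                            x 2 * (1 - α * x 0 - β * x 1 - x 2)]) =
      lotkaVolterra 1 (circulant ![1, β, α]) := by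
  ext x i
  fin_cases i <;>
    simp [lotkaVolterra, mulVec, dotProduct, Fin.sum_univ_three, circulant_apply,
      -mul_eq_mul_left_iff] <;>
    ring

theorem mayLeonard_jacobian {c : ℝ} (hc : c * (1 + α + β) = 1) :
    (of fun i j => fderiv ℝ (fun y => lotkaVolterra 1 (circulant ![1, β, α]) y i) ![c, c, c]
      (Pi.single j 1)) = circulant ![-c, -(c * β), -(c * α)] := by
  have hrest : circulant ![1, β, α] *ᵥ ![c, c, c] = 1 := by
    ext i
    fin_cases i <;> simp [mulVec, dotProduct, Fin.sum_univ_three, circulant_apply] <;>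
      linear_combination hc
  rw [lotkaVolterra_jacobian_of_mulVec_eq hrest]
  ext i j
  fin_cases i <;> fin_cases j <;> simp [circulant_apply, diagonal_mul]

variable {ω : ℂ}

theorem conj_mayLeonard_eigenvalue (hω : IsPrimitiveRoot ω 3) :
    starRingEnd ℂ (-(1 + α * ω + β * ω ^ 2) / (1 + α + β)) =
      -(1 + α * ω ^ 2 + β * ω) / (1 + α + β) := by
  simp only [map_div₀, map_neg, map_add, map_mul, map_pow, map_one, Complex.conj_ofReal,
    hω.conj_eq_sq]
  congr 3
  rw [← pow_mul, show 2 * 2 = 3 + 1 by rfl, pow_succ, hω.pow_eq_one, one_mul]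

theorem charpoly_map_mayLeonard_jacobian (hω : IsPrimitiveRoot ω 3) {c : ℝ}
    (hc : c * (1 + α + β) = 1) :
    ((circulant ![-c, -(c * β), -(c * α)]).map (fun r => (r : ℂ))).charpoly =
      (X + 1) * (X - C (-(1 + α * ω + β * ω ^ 2) / (1 + α + β))) *
        (X - C (starRingEnd ℂ (-(1 + α * ω + β * ω ^ 2) / (1 + α + β)))) := by
  have hcC : (c : ℂ) * (1 + α + β) = 1 := by exact_mod_cast hc
  have hsC : (1 + α + β : ℂ) ≠ 0 := right_ne_zero_of_mul_eq_one hcC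
  have hcast : (fun i => ((![-c, -(c * β), -(c * α)] i : ℝ) : ℂ)) =
      ![-(c : ℂ), -(c * β), -(c * α)] := by
    ext i
    fin_cases i <;> simp
  have hroot₁ : -(c : ℂ) + -(c * α) + -(c * β) = -1 := by linear_combination -hcC
  have hroot₂ : -(c : ℂ) + -(c * α) * ω + -(c * β) * ω ^ 2 =
      -(1 + α * ω + β * ω ^ 2) / (1 + α + β) := by
    rw [eq_div_iff hsC]
    linear_combination (-(1 + α * ω + β * ω ^ 2)) * hcC
  have hroot₃ : -(c : ℂ) + -(c * α) * ω ^ 2 + -(c * β) * ω =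
      starRingEnd ℂ (-(1 + α * ω + β * ω ^ 2) / (1 + α + β)) := by
    rw [conj_mayLeonard_eigenvalue α β hω, eq_div_iff hsC]
    linear_combination (-(1 + α * ω ^ 2 + β * ω)) * hcC
  rw [map_circulant, hcast, charpoly_circulant_fin_three hω.sq_add_self_add_one, hroot₁, hroot₂,
    hroot₃, map_neg, map_one, sub_neg_eq_add]

theorem re_mayLeonard_eigenvalue (hω : IsPrimitiveRoot ω 3) :
    (-(1 + α * ω + β * ω ^ 2) / (1 + α + β)).re = (α + β - 2) / (2 * (1 + α + β)) := by
  apply Complex.ofReal_injective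
  rw [Complex.re_eq_add_conj, conj_mayLeonard_eigenvalue α β hω, ← add_div,
    div_div, mul_comm (1 + (α : ℂ) + β)]
  push_cast
  congr 1
  linear_combination (-(α + β : ℂ)) * hω.sq_add_self_add_one

theorem im_mayLeonard_eigenvalue_ne_zero (hω : IsPrimitiveRoot ω 3) (hαβ : α ≠ β)
    (hs : 1 + α + β ≠ 0) :
    (-(1 + α * ω + β * ω ^ 2) / (1 + α + β)).im ≠ 0 := by
  have hsC : (1 + α + β : ℂ) ≠ 0 := by exact_mod_cast hs
  rw [Ne, ← Complex.conj_eq_iff_im, conj_mayLeonard_eigenvalue α β hω, div_left_inj' hsC,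
    neg_inj]
  intro h
  have hzero : ((α - β : ℝ) : ℂ) * (ω ^ 2 - ω) = 0 := by
    push_cast
    linear_combination h
  rcases mul_eq_zero.mp hzero with h' | h'
  · exact hαβ (sub_eq_zero.mp (Complex.ofReal_eq_zero.mp h'))
  · exact hω.sq_ne_self (sub_eq_zero.mp h')

end MayLeonard

/-- At the interior rest point `y = (c,c,c)`, `c = 1/(1+α+β)`, of the May–Leonard system
(with `α ≠ β` and `1 + α + β ≠ 0`), the eigenvalues of the Jacobian `DF(y)`, viewed over `ℂ`,
are `-1` and the complex-conjugate pair `μ = -(1 + αω + βω²)/(1+α+β)`,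
`μ̄ = -(1 + αω² + βω)/(1+α+β)` with `ω = e^{2πi/3}`; each of `μ, μ̄` has real part
`(α + β - 2)/(2(1+α+β))`.  In particular, if `0 < β < 1 < α` and `α + β > 2`, then `DF(y)`
has the negative real eigenvalue `-1` and a pair of genuinely complex eigenvalues with
strictly positive real part. -/
theorem stmt14 (α β : ℝ) (hαβ : α ≠ β) (hs : 1 + α + β ≠ 0)
    (c : ℝ) (hc : c = 1 / (1 + α + β))
    (F : (Fin 3 → ℝ) → (Fin 3 → ℝ))
    (hF : F = fun x => ![x 0 * (1 - x 0 - α * x 1 - β * x 2),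
                         x 1 * (1 - β * x 0 - x 1 - α * x 2),
                         x 2 * (1 - α * x 0 - β * x 1 - x 2)])
    (DF : Matrix (Fin 3) (Fin 3) ℝ)
    (hDF : DF = Matrix.of fun i j =>
      fderiv ℝ (fun y => F y i) ![c, c, c] (Pi.single j 1))
    (ω μ : ℂ)
    (hω : ω = Complex.exp (2 * Real.pi * Complex.I / 3))
    (hμ : μ = -(1 + α * ω + β * ω ^ 2) / (1 + α + β)) :
    (DF.map (fun r => (r : ℂ))).charpoly =
      (Polynomial.X + 1) * (Polynomial.X - Polynomial.C μ) *
        (Polynomial.X - Polynomial.C (starRingEnd ℂ μ)) ∧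
    starRingEnd ℂ μ = -(1 + α * ω ^ 2 + β * ω) / (1 + α + β) ∧
    μ.re = (α + β - 2) / (2 * (1 + α + β)) ∧
    ((0 < β ∧ β < 1 ∧ 1 < α ∧ 2 < α + β) → 0 < μ.re ∧ μ.im ≠ 0) := by
  have hζ : IsPrimitiveRoot ω 3 := by
    rw [hω]
    exact_mod_cast Complex.isPrimitiveRoot_exp 3 (by norm_num)
  have hcs : c * (1 + α + β) = 1 := by rw [hc]; field_simp
  have hre := re_mayLeonard_eigenvalue α β hζ
  subst hμ
  refine ⟨?_, conj_mayLeonard_eigenvalue α β hζ, hre, fun ⟨_, _, _, hαβ2⟩ => ⟨?_, ?_⟩⟩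
  · rw [hDF, hF.trans (mayLeonard_eq_lotkaVolterra α β), mayLeonard_jacobian α β hcs,
      charpoly_map_mayLeonard_jacobian α β hζ hcs]
  · rw [hre]
    apply div_pos <;> linarith
  · exact im_mayLeonard_eigenvalue_ne_zero α β hζ hαβ hs
end
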